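/- Limiting terminating q-Gauss identity: Σ_{k=0}^{n} (-1)^{n-k} [n k]_q q^{binom(n-k,2)} / (c;q)_k = q^{2 binom(n,2)} c^n / (c;q)_n, for complex c, q with (c;q)_n ≠ 0 and the q-binomial coefficients well-defined. -/
import Mathlib

noncomputable def qpoch (a q : ℂ) (n : ℕ) : ℂ := ∏ i ∈ Finset.range n, (1 - a * q ^ i)

noncomputable def qbinom (q : ℂ) (n k : ℕ) : ℂ :=
  qpoch q q n / (qpoch q q k * qpoch q q (n - k))

lemma qpoch_zero (a q : ℂ) : qpoch a q 0 = 1 := by simp [qpoch]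

lemma qpoch_succ (a q : ℂ) (n : ℕ) :
    qpoch a q (n + 1) = qpoch a q n * (1 - a * q ^ n) :=
  Finset.prod_range_succ _ _

lemma qpoch_succ' (a q : ℂ) (n : ℕ) :
    qpoch a q (n + 1) = (1 - a) * qpoch (a * q) q n := by
  rw [qpoch, Finset.prod_range_succ', pow_zero, mul_one, mul_comm, qpoch]
  congr 1
  refine Finset.prod_congr rfl fun i _ => ?_
  ring

lemma qpoch_ne_zero {c q : ℂ} {k : ℕ} (h : ∀ i < k, 1 - c * q ^ i ≠ 0) :
    qpoch c q k ≠ 0 :=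
  Finset.prod_ne_zero_iff.mpr fun i hi => h i (Finset.mem_range.mp hi)

lemma qbinom_self {q : ℂ} (n : ℕ) (h : qpoch q q n ≠ 0) : qbinom q n n = 1 := by
  simp [qbinom, qpoch_zero, div_self h]

lemma qbinom_zero' {q : ℂ} (n : ℕ) (h : qpoch q q n ≠ 0) : qbinom q n 0 = 1 := by
  simp [qbinom, qpoch_zero, div_self h]

lemma two_dvd_aux (m : ℕ) : 2 ∣ m * (m - 1) := by
  cases m with
  | zero => simp
  | succ m => simpa [Nat.mul_comm] using (Nat.even_mul_succ_self m).two_dvd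

lemma esucc (m : ℕ) : (m + 1) * m / 2 = m * (m - 1) / 2 + m := by
  have h1 := two_dvd_aux m
  have h2 : (m + 1) * m = m * (m - 1) + 2 * m := by
    cases m with
    | zero => simp
    | succ m => simp only [Nat.succ_sub_one]; ring
  omega

lemma pascal {q : ℂ} {n k : ℕ} (hk : k + 1 ≤ n) (hq : ∀ j ≤ n, qpoch q q j ≠ 0) :
    qbinom q (n + 1) (k + 1) = q ^ (n - k) * qbinom q n k + qbinom q n (k + 1) := by
  obtain ⟨j, rfl⟩ : ∃ j, n = k + 1 + j := ⟨n - (k + 1), by omega⟩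
  have ha : qpoch q q k ≠ 0 := hq k (by omega)
  have hb : qpoch q q (k + 1) ≠ 0 := hq (k + 1) (by omega)
  have hP : qpoch q q j ≠ 0 := hq j (by omega)
  have hQ : qpoch q q (j + 1) ≠ 0 := hq (j + 1) (by omega)
  have hN : qpoch q q (k + 1 + j) ≠ 0 := hq (k + 1 + j) (by omega)
  have e1 : k + 1 + j - k = j + 1 := by omega
  have e2 : k + 1 + j - (k + 1) = j := by omega
  have e3 : k + 1 + j + 1 - (k + 1) = j + 1 := by omega
  rw [qbinom, qbinom, qbinom, e1, e2, e3]
  have hb1 : (1 - q * q ^ k) ≠ 0 := by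
    intro h; exact hb (by simp [qpoch_succ, h])
  have hQ1 : (1 - q * q ^ j) ≠ 0 := by
    intro h; exact hQ (by simp [qpoch_succ, h])
  rw [show k + 1 + j + 1 = (k + 1 + j) + 1 from rfl, qpoch_succ q q (k + 1 + j),
    qpoch_succ q q j, qpoch_succ q q k]
  field_simp
  ring

lemma key (q : ℂ) : ∀ n : ℕ, ∀ c : ℂ, (∀ i < n, 1 - c * q ^ i ≠ 0) →
    (∀ k ≤ n, qpoch q q k ≠ 0) →
    ∑ k ∈ Finset.range (n + 1),
        (-1) ^ (n - k) * qbinom q n k * q ^ ((n - k) * (n - k - 1) / 2) *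
          (1 / qpoch c q k) =
      q ^ (n * (n - 1)) * c ^ n / qpoch c q n := by
  intro n
  induction n with
  | zero =>
    intro c _ _
    simp [qbinom, qpoch]
  | succ n IH =>
    intro c hc hq
    have hq' : ∀ k ≤ n, qpoch q q k ≠ 0 := fun k hk => hq k (by omega)
    have hc1 : (1 : ℂ) - c ≠ 0 := by simpa using hc 0 (by omega)
    have hcq : ∀ i < n, 1 - c * q * q ^ i ≠ 0 := by
      intro i hi
      have h := hc (i + 1) (by omega)
      rw [pow_succ] at h
      rwa [show 1 - c * q * q ^ i = 1 - c * (q ^ i * q) by ring]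
    have hck : ∀ k, k ≤ n + 1 → qpoch c q k ≠ 0 := fun k hk =>
      qpoch_ne_zero fun i hi => hc i (by omega)
    have hcqk : ∀ k, k ≤ n → qpoch (c * q) q k ≠ 0 := fun k hk =>
      qpoch_ne_zero fun i hi => hcq i (by omega)
    set A : ℕ → ℂ := fun k =>
      (-1) ^ (n + 1 - k) * qbinom q (n + 1) k *
        q ^ ((n + 1 - k) * (n + 1 - k - 1) / 2) * (1 / qpoch c q k) with hA_def
    set D : ℕ → ℂ := fun k =>
      (-1) ^ (n - k) * qbinom q n k *
        q ^ ((n - k) * (n - k - 1) / 2 + (n - k)) with hD_def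
    set C1 : ℕ → ℂ := fun k => D k * (1 / qpoch c q (k + 1)) with hC1_def
    set C2 : ℕ → ℂ := fun k => D k * (1 / qpoch c q k) with hC2_def
    set B : ℕ → ℂ := fun k =>
      (-1) ^ (n - k) * qbinom q n k *
        q ^ ((n - k) * (n - k - 1) / 2) * (1 / qpoch (c * q) q k) with hB_def
    have hA0 : A 0 = -C2 0 := by
      simp only [hA_def, hC2_def, hD_def, Nat.sub_zero, Nat.add_sub_cancel, qpoch_zero]
      rw [qbinom_zero' (n + 1) (hq (n + 1) le_rfl), qbinom_zero' n (hq n (by omega)),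
        esucc n, pow_succ]
      ring
    have hAtop : A (n + 1) = C1 n := by
      simp only [hA_def, hC1_def, hD_def, Nat.sub_self]
      rw [qbinom_self (n + 1) (hq (n + 1) le_rfl), qbinom_self n (hq n (by omega))]
    have hmid : ∀ k ∈ Finset.range n, A (k + 1) = C1 k - C2 (k + 1) := by
      intro k hk
      rw [Finset.mem_range] at hk
      obtain ⟨j, rfl⟩ : ∃ j, n = k + 1 + j := ⟨n - (k + 1), by omega⟩
      have e1 : k + 1 + j + 1 - (k + 1) = j + 1 := by omega
      have e2 : k + 1 + j - k = j + 1 := by omega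
      have e3 : k + 1 + j - (k + 1) = j := by omega
      simp only [hA_def, hC1_def, hC2_def, hD_def, e1, e2, e3, Nat.add_sub_cancel,
        show k + 1 + j + 1 = (k + 1 + j) + 1 from rfl]
      rw [esucc j, pascal (by omega) hq', e2]
      rw [pow_add q (j * (j - 1) / 2 + j) (j + 1)]
      ring
    have step1 : (∑ k ∈ Finset.range (n + 1 + 1), A k) =
        ∑ k ∈ Finset.range (n + 1), (C1 k - C2 k) := by
      rw [Finset.sum_range_succ' A (n + 1), Finset.sum_range_succ (fun k => A (k + 1)) n,
        Finset.sum_sub_distrib, Finset.sum_range_succ C1 n, Finset.sum_range_succ' C2 n,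
        Finset.sum_congr rfl hmid, Finset.sum_sub_distrib, hA0, hAtop]
      ring
    have hstep2 : ∀ k ∈ Finset.range (n + 1), C1 k - C2 k = c * q ^ n / (1 - c) * B k := by
      intro k hk
      rw [Finset.mem_range] at hk
      have ha : qpoch c q k ≠ 0 := hck k (by omega)
      have hb : 1 - c * q ^ k ≠ 0 := hc k (by omega)
      have hPk : qpoch (c * q) q k ≠ 0 := hcqk k (by omega)
      have hPinv : 1 / qpoch (c * q) q k = (1 - c) * (1 / qpoch c q (k + 1)) := by
        rw [qpoch_succ']
        field_simp
      obtain ⟨j, rfl⟩ : ∃ j, n = k + j := ⟨n - k, by omega⟩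
      simp only [hC1_def, hC2_def, hD_def, hB_def, Nat.add_sub_cancel_left]
      rw [hPinv, qpoch_succ c q k, pow_add q (j * (j - 1) / 2) j, pow_add q k j]
      field_simp
      ring
    rw [step1, Finset.sum_congr rfl hstep2, ← Finset.mul_sum]
    have hIH := IH (c * q) hcq hq'
    rw [hB_def, hIH]
    have hPn : qpoch (c * q) q n ≠ 0 := hcqk n le_rfl
    have hE : (n + 1) * n = n * (n - 1) + n + n := by
      cases n with
      | zero => simp
      | succ m => simp only [Nat.succ_sub_one]; ring
    rw [Nat.add_sub_cancel, qpoch_succ' c q n, mul_pow, hE, pow_add, pow_add]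
    field_simp
    ring

theorem limiting_terminating_q_gauss (q c : ℂ) (n : ℕ)
    (hc : ∀ i < n, 1 - c * q ^ i ≠ 0) (hpoch : ∀ k ≤ n, qpoch q q k ≠ 0) :
    ∑ k ∈ Finset.range (n + 1),
        (-1) ^ (n - k) * qbinom q n k * q ^ ((n - k) * (n - k - 1) / 2) *
          (1 / qpoch c q k) =
      q ^ (2 * (n * (n - 1) / 2)) * c ^ n / qpoch c q n := by
  rw [Nat.mul_div_cancel' (two_dvd_aux n)]
  exact key q n c hc hpoch
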